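/- Let n, p, q be positive integers, let t : Fin n → Fin q be a surjective map, let X be an n × p real matrix with XᵀX invertible whose rows are constant on treatment classes (t(i) = t(j) implies row i of X equals row j of X), let Z be the n × q indicator matrix with Z i l = 1 if t(i) = l and 0 otherwise, and let κ be a real number. Then tr[(I_n − H_X)(I_n + κ H_Z)] = (1 + κ)(n − p) − κ(n − q), where H_X = X (XᵀX)⁻¹ Xᵀ and H_Z = Z (ZᵀZ)⁻¹ Zᵀ. -/

import Mathlib

/-!
Rows of `X` constant on treatment classes means `X = Z B` for some `B`, so `H_Z X = X`. Hence
`tr (H_X H_Z) = tr (H_Z H_X) = tr H_X`, and by cyclicity of the trace `tr H_X = p`, `tr H_Z = q`;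
expanding the product leaves `n + κ q - p - κ p`.
-/

open Matrix

section HatMatrix

variable {m k l R : Type*} [Fintype m] [Fintype k] [Fintype l] [DecidableEq k] [DecidableEq l]
  [CommRing R]

noncomputable def hatMatrix (X : Matrix m k R) : Matrix m m R := X * (Xᵀ * X)⁻¹ * Xᵀ

theorem trace_hatMatrix {X : Matrix m k R} (hX : IsUnit (Xᵀ * X).det) :
    (hatMatrix X).trace = Fintype.card k := by
  rw [hatMatrix, trace_mul_cycle, mul_nonsing_inv _ hX, trace_one]

theorem hatMatrix_mul_mul_right {Z : Matrix m l R} (hZ : IsUnit (Zᵀ * Z).det)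
    {o : Type*} (B : Matrix l o R) : hatMatrix Z * (Z * B) = Z * B :=
  calc hatMatrix Z * (Z * B) = Z * ((Zᵀ * Z)⁻¹ * (Zᵀ * Z)) * B := by
        simp only [hatMatrix, Matrix.mul_assoc]
    _ = Z * B := by rw [nonsing_inv_mul _ hZ, Matrix.mul_one]

theorem trace_hatMatrix_mul_hatMatrix {X : Matrix m k R} {Z : Matrix m l R}
    (hX : IsUnit (Xᵀ * X).det) (hZX : hatMatrix Z * X = X) :
    (hatMatrix X * hatMatrix Z).trace = Fintype.card k := by
  rw [trace_mul_comm, hatMatrix.eq_1 X, ← Matrix.mul_assoc, ← Matrix.mul_assoc, hZX,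
    ← hatMatrix.eq_1, trace_hatMatrix hX]

variable [DecidableEq m]

theorem trace_one_sub_hatMatrix_mul_one_add_smul_hatMatrix {X : Matrix m k R}
    {Z : Matrix m l R} (hX : IsUnit (Xᵀ * X).det) (hZ : IsUnit (Zᵀ * Z).det)
    (hZX : hatMatrix Z * X = X) (κ : R) :
    ((1 - hatMatrix X) * (1 + κ • hatMatrix Z)).trace
      = (1 + κ) * (Fintype.card m - Fintype.card k) - κ * (Fintype.card m - Fintype.card l) := by
  rw [sub_mul, mul_add, mul_add, Matrix.one_mul, Matrix.one_mul, Matrix.mul_smul, Matrix.mul_one,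
    trace_sub, trace_add, trace_add, trace_one, trace_smul, trace_smul, trace_hatMatrix hX,
    trace_hatMatrix hZ, trace_hatMatrix_mul_hatMatrix hX hZX, smul_eq_mul, smul_eq_mul]
  ring

end HatMatrix

section Indicator

variable {m l R : Type*} [DecidableEq l]

def indicatorMatrix (R : Type*) [Zero R] [One R] (t : m → l) : Matrix m l R :=
  of fun i c => if t i = c then 1 else 0

theorem indicatorMatrix_transpose_mul_self [Fintype m] [Semiring R] (t : m → l) :
    (indicatorMatrix R t)ᵀ * indicatorMatrix R t
      = diagonal fun c => ((Finset.univ.filter fun i => t i = c).card : R) := by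
  ext c c'
  simp only [indicatorMatrix, mul_apply, transpose_apply, of_apply, diagonal_apply,
    ite_zero_mul_ite_zero, mul_one]
  rcases eq_or_ne c c' with rfl | hcc'
  · simp [Finset.sum_boole]
  · refine (Finset.sum_eq_zero fun j _ => if_neg ?_).trans (if_neg hcc').symm
    exact fun h => hcc' (h.1.symm.trans h.2)

theorem isUnit_det_indicatorMatrix_gram [Fintype m] [Fintype l] [Field R] [CharZero R]
    {t : m → l} (ht : Function.Surjective t) :
    IsUnit ((indicatorMatrix R t)ᵀ * indicatorMatrix R t).det := by
  rw [indicatorMatrix_transpose_mul_self, det_diagonal, isUnit_iff_ne_zero,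
    Finset.prod_ne_zero_iff]
  intro c _
  obtain ⟨i, rfl⟩ := ht c
  exact Nat.cast_ne_zero.mpr
    (Finset.card_ne_zero_of_mem (Finset.mem_filter.mpr ⟨Finset.mem_univ i, rfl⟩))

theorem indicatorMatrix_mul_submatrix_surjInv {k : Type*} [Fintype l] [Semiring R] {t : m → l}
    (ht : Function.Surjective t) {X : Matrix m k R} (hX : ∀ i j, t i = t j → X i = X j) :
    indicatorMatrix R t * X.submatrix (Function.surjInv ht) id = X := by
  ext i a
  simp only [indicatorMatrix, mul_apply, of_apply, submatrix_apply, id_eq, ite_mul, one_mul,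
    zero_mul, Finset.sum_ite_eq, Finset.mem_univ, if_true]
  exact congrFun (hX _ _ (Function.surjInv_eq ht (t i))) a

end Indicator

theorem trace_residual_projection_identity_general
    {n p q : ℕ}
    (t : Fin n → Fin q) (ht : Function.Surjective t)
    (X : Matrix (Fin n) (Fin p) ℝ) (hX : IsUnit (Xᵀ * X).det)
    (hrow : ∀ i j, t i = t j → X i = X j)
    (Z : Matrix (Fin n) (Fin q) ℝ)
    (hZ : ∀ i l, Z i l = if t i = l then 1 else 0)
    (κ : ℝ) :
    (((1 : Matrix (Fin n) (Fin n) ℝ) - X * (Xᵀ * X)⁻¹ * Xᵀ)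
        * ((1 : Matrix (Fin n) (Fin n) ℝ) + κ • (Z * (Zᵀ * Z)⁻¹ * Zᵀ))).trace
      = (1 + κ) * ((n : ℝ) - p) - κ * ((n : ℝ) - q) := by
  obtain rfl : Z = indicatorMatrix ℝ t := ext hZ
  have hZX : hatMatrix (indicatorMatrix ℝ t) * X = X := by
    rw [← indicatorMatrix_mul_submatrix_surjInv ht hrow,
      hatMatrix_mul_mul_right (isUnit_det_indicatorMatrix_gram ht)]
  simpa only [Fintype.card_fin, hatMatrix] using
    trace_one_sub_hatMatrix_mul_one_add_smul_hatMatrix hX (isUnit_det_indicatorMatrix_gram ht)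
      hZX κ

/-- Section SM5: tr[(I_n − H_X)(I_n + κ H_Z)] = (1 + κ)(n − p) − κ(n − q),
for hat matrices H_X, H_Z of the fitted regression model matrix X (rows
constant on treatment classes) and the full-treatment indicator matrix Z. -/
theorem trace_residual_projection_identity
    {n p q : ℕ} (hn : 0 < n) (hp : 0 < p) (hq : 0 < q)
    (t : Fin n → Fin q) (ht : Function.Surjective t)
    (X : Matrix (Fin n) (Fin p) ℝ) (hX : IsUnit (Xᵀ * X).det)
    (hrow : ∀ i j, t i = t j → X i = X j)
    (Z : Matrix (Fin n) (Fin q) ℝ)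
    (hZ : ∀ i l, Z i l = if t i = l then 1 else 0)
    (κ : ℝ) :
    (((1 : Matrix (Fin n) (Fin n) ℝ) - X * (Xᵀ * X)⁻¹ * Xᵀ)
        * ((1 : Matrix (Fin n) (Fin n) ℝ) + κ • (Z * (Zᵀ * Z)⁻¹ * Zᵀ))).trace
      = (1 + κ) * ((n : ℝ) - p) - κ * ((n : ℝ) - q) :=
  trace_residual_projection_identity_general t ht X hX hrow Z hZ κ
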